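/- For i = 1, 2, let X_i be a finite undirected simple graph with bi-threshold vertex functions (arbitrary per-vertex up- and down-thresholds) and let π_i be a permutation of its vertices such that the SDS map F_{π_i} over X_i has a periodic orbit of length c_i. Let u_i ∈ v[X_i], and let X be the graph obtained as the disjoint union of X_1 and X_2 together with one additional new vertex w and the two edges {u_1, w} and {u_2, w}. Keep all thresholds of vertices of X_1 and X_2 unchanged, and assign to w the up-threshold k↑_w = 3. Then the SDS map over X with update sequence π = (π_1 | π_2 | w) (the juxtaposition of π_1, then π_2, then w) has a periodic orbit of length lcm(c_1, c_2). -/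

import Mathlib

/-!
Start the new vertex `w` in state `0`. It never switches on: when it is updated at most its two
neighbours `u₁, u₂` are in state `1`, below its up-threshold `3`. Since `w` is off, the vertices
of `X₁` and `X₂` see exactly their old neighbourhoods, so on such states the SDS map over `X` is
the product of the two component SDS maps. The minimal period of a point under a product map is
the lcm of the minimal periods of its coordinates.
-/

/-- `σ(x[v])`: the number of vertices in state `1` among `v` and its neighbors. -/
noncomputable def sigmaLoc {V : Type} (G : SimpleGraph V) (x : V → Bool) (v : V) : ℕ :=
  {u : V | G.Adj v u ∧ x u = true}.ncard + (if x v = true then 1 else 0)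

/-- The `X`-local bi-threshold function `F_v`: updates coordinate `v` of `x` by the
bi-threshold rule with up-threshold `kup v` and down-threshold `kdown v`, leaving all other
coordinates unchanged. -/
noncomputable def localStep {V : Type} [DecidableEq V] (G : SimpleGraph V)
    (kup kdown : V → ℕ) (x : V → Bool) (v : V) : V → Bool :=
  Function.update x v
    (if x v = true then (if sigmaLoc G x v < kdown v then false else true)
     else (if kup v ≤ sigmaLoc G x v then true else false))

/-- The sequential dynamical system map for the update sequence `l`:
apply the local functions `F_v` in the order given by `l`. -/
noncomputable def sdsMap {V : Type} [DecidableEq V] (G : SimpleGraph V)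
    (kup kdown : V → ℕ) (l : List V) (x : V → Bool) : V → Bool :=
  l.foldl (localStep G kup kdown) x

/-- The graph obtained as the disjoint union of `G₁` and `G₂` together with one extra
vertex `w` joined to `u₁ ∈ G₁` and `u₂ ∈ G₂`. -/
def unionGraph {n₁ n₂ : ℕ} (G₁ : SimpleGraph (Fin n₁)) (G₂ : SimpleGraph (Fin n₂))
    (u₁ : Fin n₁) (u₂ : Fin n₂) : SimpleGraph ((Fin n₁ ⊕ Fin n₂) ⊕ Unit) :=
  SimpleGraph.fromRel (fun v w =>
    match v, w with
    | .inl (.inl a), .inl (.inl b) => G₁.Adj a b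
    | .inl (.inr a), .inl (.inr b) => G₂.Adj a b
    | .inl (.inl a), .inr _ => a = u₁
    | .inl (.inr a), .inr _ => a = u₂
    | _, _ => False)

namespace Function

variable {α β : Type*}

theorem minimalPeriod_eq_iff_of_pos {f : α → α} {x : α} {c : ℕ} (hc : 0 < c) :
    minimalPeriod f x = c ↔ f^[c] x = x ∧ ∀ p, 0 < p → p < c → f^[p] x ≠ x := by
  constructor
  · rintro rfl
    exact ⟨iterate_minimalPeriod, fun p hp hlt =>
      not_isPeriodicPt_of_pos_of_lt_minimalPeriod hp.ne' hlt⟩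
  · rintro ⟨hx, hmin⟩
    have hx : IsPeriodicPt f c x := hx
    refine le_antisymm (hx.minimalPeriod_le hc) (not_lt.1 fun hlt => ?_)
    exact hmin _ (hx.minimalPeriod_pos hc) hlt iterate_minimalPeriod

theorem Semiconj.minimalPeriod_eq {fa : α → α} {fb : β → β} {g : α → β}
    (h : Semiconj g fa fb) (hg : Injective g) (x : α) :
    minimalPeriod fb (g x) = minimalPeriod fa x :=
  minimalPeriod_eq_minimalPeriod_iff.2 fun n =>
    ⟨fun hx => hg <| (h.iterate_right n x).trans hx, fun hx => hx.map h⟩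

end Function

section UnionGraph

variable {n₁ n₂ : ℕ} {G₁ : SimpleGraph (Fin n₁)} {G₂ : SimpleGraph (Fin n₂)}
  {u₁ : Fin n₁} {u₂ : Fin n₂}

@[simp] lemma unionGraph_adj_inl_inl {a b : Fin n₁} :
    (unionGraph G₁ G₂ u₁ u₂).Adj (.inl (.inl a)) (.inl (.inl b)) ↔ G₁.Adj a b := by
  simp +contextual [unionGraph, G₁.adj_comm b a, G₁.ne_of_adj]

@[simp] lemma unionGraph_adj_inr_inr {a b : Fin n₂} :
    (unionGraph G₁ G₂ u₁ u₂).Adj (.inl (.inr a)) (.inl (.inr b)) ↔ G₂.Adj a b := by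
  simp +contextual [unionGraph, G₂.adj_comm b a, G₂.ne_of_adj]

@[simp] lemma unionGraph_not_adj_inl_inr {a : Fin n₁} {b : Fin n₂} :
    ¬ (unionGraph G₁ G₂ u₁ u₂).Adj (.inl (.inl a)) (.inl (.inr b)) := by
  simp [unionGraph]

@[simp] lemma unionGraph_not_adj_inr_inl {a : Fin n₂} {b : Fin n₁} :
    ¬ (unionGraph G₁ G₂ u₁ u₂).Adj (.inl (.inr a)) (.inl (.inl b)) := by
  simp [unionGraph]

lemma unionGraph_adj_inr {v : (Fin n₁ ⊕ Fin n₂) ⊕ Unit} :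
    (unionGraph G₁ G₂ u₁ u₂).Adj (.inr ()) v ↔
      v = .inl (.inl u₁) ∨ v = .inl (.inr u₂) := by
  rcases v with (a | a) | _ <;> simp [unionGraph, eq_comm]

def unionState (x : (Fin n₁ → Bool) × (Fin n₂ → Bool)) :
    (Fin n₁ ⊕ Fin n₂) ⊕ Unit → Bool :=
  Sum.elim (Sum.elim x.1 x.2) fun _ => false

lemma unionState_injective : Function.Injective (unionState (n₁ := n₁) (n₂ := n₂)) := by
  rintro ⟨x₁, x₂⟩ ⟨y₁, y₂⟩ h
  simp only [Prod.mk.injEq]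
  exact ⟨funext fun a => congrFun h (.inl (.inl a)),
    funext fun a => congrFun h (.inl (.inr a))⟩

lemma sigmaLoc_unionState_inl_inl (x : (Fin n₁ → Bool) × (Fin n₂ → Bool)) (v : Fin n₁) :
    sigmaLoc (unionGraph G₁ G₂ u₁ u₂) (unionState x) (.inl (.inl v)) =
      sigmaLoc G₁ x.1 v := by
  have hnbrs :
      {u | (unionGraph G₁ G₂ u₁ u₂).Adj (.inl (.inl v)) u ∧ unionState x u = true} =
      (Sum.inl ∘ Sum.inl) '' {a | G₁.Adj v a ∧ x.1 a = true} := by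
    ext ((a | a) | _) <;> simp [unionState]
  rw [sigmaLoc, sigmaLoc, hnbrs,
    Set.ncard_image_of_injective _ (Sum.inl_injective.comp Sum.inl_injective)]
  rfl

lemma sigmaLoc_unionState_inl_inr (x : (Fin n₁ → Bool) × (Fin n₂ → Bool)) (v : Fin n₂) :
    sigmaLoc (unionGraph G₁ G₂ u₁ u₂) (unionState x) (.inl (.inr v)) =
      sigmaLoc G₂ x.2 v := by
  have hnbrs :
      {u | (unionGraph G₁ G₂ u₁ u₂).Adj (.inl (.inr v)) u ∧ unionState x u = true} =
      (Sum.inl ∘ Sum.inr) '' {a | G₂.Adj v a ∧ x.2 a = true} := by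
    ext ((a | a) | _) <;> simp [unionState]
  rw [sigmaLoc, sigmaLoc, hnbrs,
    Set.ncard_image_of_injective _ (Sum.inl_injective.comp Sum.inr_injective)]
  rfl

lemma sigmaLoc_unionState_inr_le_two (x : (Fin n₁ → Bool) × (Fin n₂ → Bool)) :
    sigmaLoc (unionGraph G₁ G₂ u₁ u₂) (unionState x) (.inr ()) ≤ 2 := by
  have hnbrs : {u | (unionGraph G₁ G₂ u₁ u₂).Adj (.inr ()) u ∧ unionState x u = true} ⊆
      ↑({.inl (.inl u₁), .inl (.inr u₂)} : Finset ((Fin n₁ ⊕ Fin n₂) ⊕ Unit)) := by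
    intro u hu
    simpa [unionGraph_adj_inr] using hu.1
  have := (Set.ncard_le_ncard hnbrs (Finset.finite_toSet _)).trans_eq (Set.ncard_coe_finset _)
  simp only [sigmaLoc, unionState, Sum.elim_inr, Bool.false_eq_true, if_false, add_zero]
  exact this.trans Finset.card_le_two

variable {kup₁ kdown₁ : Fin n₁ → ℕ} {kup₂ kdown₂ : Fin n₂ → ℕ} {kw kdw : ℕ}

lemma localStep_unionState_inl_inl (x : (Fin n₁ → Bool) × (Fin n₂ → Bool)) (v : Fin n₁) :
    localStep (unionGraph G₁ G₂ u₁ u₂) (Sum.elim (Sum.elim kup₁ kup₂) fun _ => kw)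
        (Sum.elim (Sum.elim kdown₁ kdown₂) fun _ => kdw) (unionState x) (.inl (.inl v)) =
      unionState (localStep G₁ kup₁ kdown₁ x.1 v, x.2) := by
  rw [localStep, localStep, sigmaLoc_unionState_inl_inl]
  simp only [unionState, Sum.elim_update_left, Sum.elim_inl]
  -- the two sides differ only by an η-expanded `DecidableEq` instance
  rfl

lemma localStep_unionState_inl_inr (x : (Fin n₁ → Bool) × (Fin n₂ → Bool)) (v : Fin n₂) :
    localStep (unionGraph G₁ G₂ u₁ u₂) (Sum.elim (Sum.elim kup₁ kup₂) fun _ => kw)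
        (Sum.elim (Sum.elim kdown₁ kdown₂) fun _ => kdw) (unionState x) (.inl (.inr v)) =
      unionState (x.1, localStep G₂ kup₂ kdown₂ x.2 v) := by
  rw [localStep, localStep, sigmaLoc_unionState_inl_inr]
  simp only [unionState, Sum.elim_update_left, Sum.elim_update_right, Sum.elim_inl,
    Sum.elim_inr]
  rfl

lemma localStep_unionState_inr (hkw : 3 ≤ kw) (x : (Fin n₁ → Bool) × (Fin n₂ → Bool)) :
    localStep (unionGraph G₁ G₂ u₁ u₂) (Sum.elim (Sum.elim kup₁ kup₂) fun _ => kw)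
        (Sum.elim (Sum.elim kdown₁ kdown₂) fun _ => kdw) (unionState x) (.inr ()) =
      unionState x := by
  have hσ : sigmaLoc (unionGraph G₁ G₂ u₁ u₂) (unionState x) (.inr ()) ≤ 2 :=
    sigmaLoc_unionState_inr_le_two x
  rw [localStep, if_neg (by simp [unionState]), if_neg (by simp; omega)]
  exact Function.update_eq_self _ _

lemma foldl_localStep_unionState_inl_inl (l : List (Fin n₁))
    (x : (Fin n₁ → Bool) × (Fin n₂ → Bool)) :
    (l.map fun a => .inl (.inl a)).foldl (localStep (unionGraph G₁ G₂ u₁ u₂)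
        (Sum.elim (Sum.elim kup₁ kup₂) fun _ => kw)
        (Sum.elim (Sum.elim kdown₁ kdown₂) fun _ => kdw)) (unionState x) =
      unionState (l.foldl (localStep G₁ kup₁ kdown₁) x.1, x.2) := by
  rw [List.foldl_map]
  exact List.foldl_hom (fun y => unionState (y, x.2)) fun y v =>
    localStep_unionState_inl_inl (y, x.2) v

lemma foldl_localStep_unionState_inl_inr (l : List (Fin n₂))
    (x : (Fin n₁ → Bool) × (Fin n₂ → Bool)) :
    (l.map fun a => .inl (.inr a)).foldl (localStep (unionGraph G₁ G₂ u₁ u₂)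
        (Sum.elim (Sum.elim kup₁ kup₂) fun _ => kw)
        (Sum.elim (Sum.elim kdown₁ kdown₂) fun _ => kdw)) (unionState x) =
      unionState (x.1, l.foldl (localStep G₂ kup₂ kdown₂) x.2) := by
  rw [List.foldl_map]
  exact List.foldl_hom (fun y => unionState (x.1, y)) fun y v =>
    localStep_unionState_inl_inr (x.1, y) v

lemma semiconj_unionState_sdsMap (hkw : 3 ≤ kw) (π₁ : List (Fin n₁))
    (π₂ : List (Fin n₂)) :
    Function.Semiconj unionState
      (Prod.map (sdsMap G₁ kup₁ kdown₁ π₁) (sdsMap G₂ kup₂ kdown₂ π₂))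
      (sdsMap (unionGraph G₁ G₂ u₁ u₂) (Sum.elim (Sum.elim kup₁ kup₂) fun _ => kw)
        (Sum.elim (Sum.elim kdown₁ kdown₂) fun _ => kdw)
        (π₁.map (fun a => .inl (.inl a)) ++ π₂.map (fun a => .inl (.inr a)) ++
          [.inr ()])) := by
  intro x
  simp only [sdsMap, List.foldl_append, foldl_localStep_unionState_inl_inl,
    foldl_localStep_unionState_inl_inr, List.foldl_cons, List.foldl_nil,
    localStep_unionState_inr hkw]
  rfl

lemma minimalPeriod_sdsMap_unionState (hkw : 3 ≤ kw) (π₁ : List (Fin n₁))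
    (π₂ : List (Fin n₂)) (x : (Fin n₁ → Bool) × (Fin n₂ → Bool)) :
    Function.minimalPeriod (sdsMap (unionGraph G₁ G₂ u₁ u₂)
        (Sum.elim (Sum.elim kup₁ kup₂) fun _ => kw)
        (Sum.elim (Sum.elim kdown₁ kdown₂) fun _ => kdw)
        (π₁.map (fun a => .inl (.inl a)) ++ π₂.map (fun a => .inl (.inr a)) ++ [.inr ()]))
        (unionState x) =
      (Function.minimalPeriod (sdsMap G₁ kup₁ kdown₁ π₁) x.1).lcm
        (Function.minimalPeriod (sdsMap G₂ kup₂ kdown₂ π₂) x.2) := by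
  rw [(semiconj_unionState_sdsMap hkw π₁ π₂).minimalPeriod_eq unionState_injective,
    Function.minimalPeriod_prodMap]

end UnionGraph

theorem union_bithreshold_lcm_cycle_general
    (n₁ n₂ : ℕ)
    (G₁ : SimpleGraph (Fin n₁)) (G₂ : SimpleGraph (Fin n₂))
    (kup₁ kdown₁ : Fin n₁ → ℕ) (kup₂ kdown₂ : Fin n₂ → ℕ)
    (π₁ : List (Fin n₁))
    (π₂ : List (Fin n₂))
    (c₁ c₂ : ℕ) (hc₁ : 0 < c₁) (hc₂ : 0 < c₂)
    (h₁ : ∃ x : Fin n₁ → Bool, (sdsMap G₁ kup₁ kdown₁ π₁)^[c₁] x = x ∧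
      ∀ p : ℕ, 0 < p → p < c₁ → (sdsMap G₁ kup₁ kdown₁ π₁)^[p] x ≠ x)
    (h₂ : ∃ x : Fin n₂ → Bool, (sdsMap G₂ kup₂ kdown₂ π₂)^[c₂] x = x ∧
      ∀ p : ℕ, 0 < p → p < c₂ → (sdsMap G₂ kup₂ kdown₂ π₂)^[p] x ≠ x)
    (u₁ : Fin n₁) (u₂ : Fin n₂) (kdw : ℕ) :
    ∃ y : (Fin n₁ ⊕ Fin n₂) ⊕ Unit → Bool,
      (sdsMap (unionGraph G₁ G₂ u₁ u₂)
          (Sum.elim (Sum.elim kup₁ kup₂) (fun _ => 3))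
          (Sum.elim (Sum.elim kdown₁ kdown₂) (fun _ => kdw))
          (π₁.map (fun a => .inl (.inl a)) ++ π₂.map (fun a => .inl (.inr a)) ++ [.inr ()]))^[Nat.lcm c₁ c₂] y = y ∧
      ∀ p : ℕ, 0 < p → p < Nat.lcm c₁ c₂ →
        (sdsMap (unionGraph G₁ G₂ u₁ u₂)
            (Sum.elim (Sum.elim kup₁ kup₂) (fun _ => 3))
            (Sum.elim (Sum.elim kdown₁ kdown₂) (fun _ => kdw))
            (π₁.map (fun a => .inl (.inl a)) ++ π₂.map (fun a => .inl (.inr a)) ++ [.inr ()]))^[p] y ≠ y := by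
  obtain ⟨x₁, hx₁, hmin₁⟩ := h₁
  obtain ⟨x₂, hx₂, hmin₂⟩ := h₂
  refine ⟨unionState (x₁, x₂),
    (Function.minimalPeriod_eq_iff_of_pos (Nat.lcm_pos hc₁ hc₂)).1 ?_⟩
  rw [minimalPeriod_sdsMap_unionState le_rfl,
    (Function.minimalPeriod_eq_iff_of_pos hc₁).2 ⟨hx₁, hmin₁⟩,
    (Function.minimalPeriod_eq_iff_of_pos hc₂).2 ⟨hx₂, hmin₂⟩]

/-- if the bi-threshold SDS over `G i` with update sequence `π i` has a
periodic orbit of length `c i` (for `i = 1, 2`), then the bi-threshold SDS over the union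
graph (disjoint union of `G₁`, `G₂` plus a new vertex `w` adjacent to `u₁` and `u₂`), with
all old thresholds unchanged, up-threshold `3` at `w` (and any down-threshold `kdw` at `w`),
and update sequence `π = (π₁ | π₂ | w)`, has a periodic orbit of length `lcm(c₁, c₂)`. -/
theorem union_bithreshold_lcm_cycle
    (n₁ n₂ : ℕ)
    (G₁ : SimpleGraph (Fin n₁)) (G₂ : SimpleGraph (Fin n₂))
    (kup₁ kdown₁ : Fin n₁ → ℕ) (kup₂ kdown₂ : Fin n₂ → ℕ)
    (π₁ : List (Fin n₁)) (hnd₁ : π₁.Nodup) (hall₁ : ∀ v, v ∈ π₁)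
    (π₂ : List (Fin n₂)) (hnd₂ : π₂.Nodup) (hall₂ : ∀ v, v ∈ π₂)
    (c₁ c₂ : ℕ) (hc₁ : 0 < c₁) (hc₂ : 0 < c₂)
    (h₁ : ∃ x : Fin n₁ → Bool, (sdsMap G₁ kup₁ kdown₁ π₁)^[c₁] x = x ∧
      ∀ p : ℕ, 0 < p → p < c₁ → (sdsMap G₁ kup₁ kdown₁ π₁)^[p] x ≠ x)
    (h₂ : ∃ x : Fin n₂ → Bool, (sdsMap G₂ kup₂ kdown₂ π₂)^[c₂] x = x ∧
      ∀ p : ℕ, 0 < p → p < c₂ → (sdsMap G₂ kup₂ kdown₂ π₂)^[p] x ≠ x)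
    (u₁ : Fin n₁) (u₂ : Fin n₂) (kdw : ℕ) :
    ∃ y : (Fin n₁ ⊕ Fin n₂) ⊕ Unit → Bool,
      (sdsMap (unionGraph G₁ G₂ u₁ u₂)
          (Sum.elim (Sum.elim kup₁ kup₂) (fun _ => 3))
          (Sum.elim (Sum.elim kdown₁ kdown₂) (fun _ => kdw))
          (π₁.map (fun a => .inl (.inl a)) ++ π₂.map (fun a => .inl (.inr a)) ++ [.inr ()]))^[Nat.lcm c₁ c₂] y = y ∧
      ∀ p : ℕ, 0 < p → p < Nat.lcm c₁ c₂ →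
        (sdsMap (unionGraph G₁ G₂ u₁ u₂)
            (Sum.elim (Sum.elim kup₁ kup₂) (fun _ => 3))
            (Sum.elim (Sum.elim kdown₁ kdown₂) (fun _ => kdw))
            (π₁.map (fun a => .inl (.inl a)) ++ π₂.map (fun a => .inl (.inr a)) ++ [.inr ()]))^[p] y ≠ y :=
  union_bithreshold_lcm_cycle_general n₁ n₂ G₁ G₂ kup₁ kdown₁ kup₂ kdown₂ π₁ π₂ c₁ c₂ hc₁ hc₂ h₁ h₂
    u₁ u₂ kdw
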